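/- arXiv:1101.2077 — 2 statements merged into one kernel-verified Lean document; each statement's English description precedes it below -/
import Mathlib

section
/- Let $H_1, H_2, H_3$ be complex Hilbert spaces, let $T : H_1 \to H_2$ and $S : H_2 \to H_3$ be closed, densely defined (possibly unbounded) linear operators such that $S \circ T = 0$ (i.e. for every $x$ in the domain of $T$, $Tx$ lies in the domain of $S$ and $S(Tx) = 0$), and let $C > 0$ be a constant. Let $g \in H_2$ be an element of the domain of $S$ with $Sg = 0$. Then there exists $v$ in the domain of $T$ with $Tv = g$ and $\|v\| \leq C$ if and only if for every $u$ in the intersection of the domain of $S$ and the domain of the adjoint $T^*$ one has $|\langle u, g \rangle|^2 \leq C^2 \left( \|T^* u\|^2 + \|S u\|^2 \right)$. -/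
/-!
Since `range T ⊆ ker S` and `g ∈ ker S`, the orthogonal projection onto the closed subspace
`ker S` preserves both `⟪u, g⟫` and `T† u` for `u ∈ dom T†`, so the estimate on `ker S ∩ dom T†`
already gives `‖⟪u, g⟫‖ ≤ C ‖T† u‖` on all of `dom T†`. This says that `T† u ↦ ⟪g, u⟫` is a
well-defined functional of norm `≤ C` on `range T†`; Hahn–Banach and Riesz represent it by some
`v` with `‖v‖ ≤ C`, and `⟪T† u, v⟫ = ⟪u, g⟫` for all `u` puts `(v, g)` in
`(graph T)ᗮᗮ = graph T` because `T` is closed.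
-/

open LinearPMap

open scoped InnerProductSpace

theorem LinearMap.exists_strongDual_comp_eq_of_norm_le {𝕜 M E : Type*} [RCLike 𝕜]
    [AddCommGroup M] [Module 𝕜 M] [NormedAddCommGroup E] [NormedSpace 𝕜 E]
    (f : M →ₗ[𝕜] E) (φ : M →ₗ[𝕜] 𝕜) {C : ℝ} (hC : 0 ≤ C) (h : ∀ m, ‖φ m‖ ≤ C * ‖f m‖) :
    ∃ Φ : StrongDual 𝕜 E, ‖Φ‖ ≤ C ∧ ∀ m, Φ (f m) = φ m := by
  have hker : LinearMap.ker f ≤ LinearMap.ker φ := fun m hm ↦ by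
    simpa [LinearMap.mem_ker.1 hm] using h m
  let ψ : LinearMap.range f →ₗ[𝕜] 𝕜 :=
    (LinearMap.ker f).liftQ φ hker ∘ₗ f.quotKerEquivRange.symm.toLinearMap
  have hψ (m : M) : ψ ⟨f m, m, rfl⟩ = φ m := by
    simp only [ψ, LinearMap.comp_apply, LinearEquiv.coe_coe,
      f.quotKerEquivRange_symm_apply_image m ⟨m, rfl⟩, Submodule.mkQ_apply, Submodule.liftQ_apply]
  have hψ_le : ∀ w, ‖ψ w‖ ≤ C * ‖w‖ := by
    rintro ⟨_, m, rfl⟩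
    simpa [hψ] using h m
  obtain ⟨Φ, hΦ, hΦ_norm⟩ := exists_extension_norm_eq _ (ψ.mkContinuous C hψ_le)
  refine ⟨Φ, hΦ_norm ▸ ψ.mkContinuous_norm_le hC hψ_le, fun m ↦ ?_⟩
  rw [← hψ]
  exact hΦ ⟨f m, m, rfl⟩

theorem LinearMap.exists_norm_le_inner_eq_of_norm_le {𝕜 M E : Type*} [RCLike 𝕜]
    [AddCommGroup M] [Module 𝕜 M] [NormedAddCommGroup E] [InnerProductSpace 𝕜 E] [CompleteSpace E]
    (f : M →ₗ[𝕜] E) (φ : M →ₗ[𝕜] 𝕜) {C : ℝ} (hC : 0 ≤ C) (h : ∀ m, ‖φ m‖ ≤ C * ‖f m‖) :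
    ∃ v : E, ‖v‖ ≤ C ∧ ∀ m, ⟪v, f m⟫_𝕜 = φ m := by
  obtain ⟨Φ, hΦ_norm, hΦ⟩ := f.exists_strongDual_comp_eq_of_norm_le φ hC h
  refine ⟨(InnerProductSpace.toDual 𝕜 E).symm Φ, by simpa using hΦ_norm, fun m ↦ ?_⟩
  rw [InnerProductSpace.toDual_symm_apply, hΦ]

namespace LinearPMap

section Kernel

variable {R E F : Type*} [CommRing R] [AddCommGroup E] [Module R E] [AddCommGroup F] [Module R F]

def ker (S : E →ₗ.[R] F) : Submodule R E :=
  S.graph.comap (LinearMap.inl R E F)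

theorem mem_ker_iff (S : E →ₗ.[R] F) (x : E) :
    x ∈ S.ker ↔ ∃ hx : x ∈ S.domain, S ⟨x, hx⟩ = 0 := by
  simp only [ker, Submodule.mem_comap, LinearMap.inl_apply, mem_graph_iff]
  constructor
  · rintro ⟨y, rfl, hy⟩
    exact ⟨y.2, hy⟩
  · rintro ⟨hx, hx0⟩
    exact ⟨⟨x, hx⟩, rfl, hx0⟩

theorem IsClosed.isClosed_ker [TopologicalSpace E] [TopologicalSpace F] {S : E →ₗ.[R] F}
    (hS : S.IsClosed) : _root_.IsClosed (S.ker : Set E) :=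
  hS.preimage (continuous_id.prodMk continuous_const)

end Kernel

variable {𝕜 E F : Type*} [RCLike 𝕜]
  [NormedAddCommGroup E] [InnerProductSpace 𝕜 E] [CompleteSpace E]
  [NormedAddCommGroup F] [InnerProductSpace 𝕜 F] {T : E →ₗ.[𝕜] F}

theorem norm_inner_le_of_apply_eq (hT : Dense (T.domain : Set E)) {g : F} {v : T.domain}
    (hv : T v = g) (u : T†.domain) : ‖⟪(u : F), g⟫_𝕜‖ ≤ ‖(v : E)‖ * ‖T† u‖ := by
  rw [← hv, ← adjoint_isFormalAdjoint hT u v, mul_comm]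
  exact norm_inner_le_norm _ _

theorem mem_graph_of_inner_adjoint_eq [CompleteSpace F] (hT_closed : T.IsClosed)
    (hT : Dense (T.domain : Set E)) {v : E} {g : F}
    (h : ∀ u : T†.domain, ⟪T† u, v⟫_𝕜 = ⟪(u : F), g⟫_𝕜) : (v, g) ∈ T.graph := by
  let e := WithLp.linearEquiv 2 𝕜 (E × F)
  let G : Submodule 𝕜 (WithLp 2 (E × F)) := T.graph.comap e.toLinearMap
  have hG : _root_.IsClosed (G : Set (WithLp 2 (E × F))) :=
    hT_closed.preimage (WithLp.prodContinuousLinearEquiv 2 𝕜 E F).continuous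
  have : CompleteSpace G := hG.completeSpace_coe
  suffices WithLp.toLp 2 (v, g) ∈ Gᗮᗮ by
    rwa [Submodule.orthogonal_orthogonal] at this
  refine (Submodule.mem_orthogonal _ _).2 fun w hw ↦ ?_
  have hw_adj : (w.snd, -w.fst) ∈ T†.graph := by
    rw [adjoint_graph_eq_graph_adjoint hT, Submodule.mem_adjoint_iff]
    intro x y hxy
    have := (Submodule.mem_orthogonal _ _).1 hw (WithLp.toLp 2 (x, y)) hxy
    rw [WithLp.prod_inner_apply] at this
    simpa [inner_neg_right, add_comm] using this
  obtain ⟨u, hu, hTu⟩ := T†.mem_graph_iff.1 hw_adj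
  have := h u
  rw [hTu, hu, inner_neg_left] at this
  rw [WithLp.prod_inner_apply]
  simp only [WithLp.ofLp_fst, WithLp.ofLp_snd]
  linear_combination -this

theorem exists_apply_eq_norm_le_of_norm_inner_le [CompleteSpace F] (hT_closed : T.IsClosed)
    (hT : Dense (T.domain : Set E)) {g : F} {C : ℝ} (hC : 0 ≤ C)
    (h : ∀ u : T†.domain, ‖⟪(u : F), g⟫_𝕜‖ ≤ C * ‖T† u‖) :
    ∃ v : T.domain, T v = g ∧ ‖(v : E)‖ ≤ C := by
  obtain ⟨v, hv_norm, hv⟩ := T†.toFun.exists_norm_le_inner_eq_of_norm_le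
    ((innerₛₗ 𝕜 g).comp T†.domain.subtype) hC fun u ↦ by simpa [norm_inner_symm] using h u
  have hgraph : (v, g) ∈ T.graph := mem_graph_of_inner_adjoint_eq hT_closed hT fun u ↦ by
    rw [← inner_conj_symm, ← inner_conj_symm (u : F)]
    exact congrArg (starRingEnd 𝕜) (hv u)
  obtain ⟨x, rfl, hx⟩ := T.mem_graph_iff.1 hgraph
  exact ⟨x, hx, hv_norm⟩

theorem exists_mem_adjoint_domain_apply_eq_zero_of_mem_orthogonal {K : Submodule 𝕜 F}
    (hT : Dense (T.domain : Set E)) (hK : ∀ x : T.domain, T x ∈ K) {w : F} (hw : w ∈ Kᗮ) :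
    ∃ hw' : w ∈ T†.domain, T† ⟨w, hw'⟩ = 0 := by
  have hTw (x : T.domain) : ⟪(0 : E), x⟫_𝕜 = ⟪w, T x⟫_𝕜 := by
    rw [inner_zero_left, (K.mem_orthogonal' w).1 hw _ (hK x)]
  have hw' := mem_adjoint_domain_of_exists w ⟨0, hTw⟩
  exact ⟨hw', adjoint_apply_eq hT ⟨w, hw'⟩ hTw⟩

theorem norm_inner_le_of_forall_mem (hT : Dense (T.domain : Set E)) (K : Submodule 𝕜 F)
    [K.HasOrthogonalProjection] (hK : ∀ x : T.domain, T x ∈ K) {g : F} (hg : g ∈ K) {C : ℝ}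
    (h : ∀ u : T†.domain, (u : F) ∈ K → ‖⟪(u : F), g⟫_𝕜‖ ≤ C * ‖T† u‖) (u : T†.domain) :
    ‖⟪(u : F), g⟫_𝕜‖ ≤ C * ‖T† u‖ := by
  obtain ⟨hw, hTw⟩ := exists_mem_adjoint_domain_apply_eq_zero_of_mem_orthogonal hT hK
    (K.sub_starProjection_mem_orthogonal u)
  let u₁ : T†.domain := u - ⟨_, hw⟩
  have hu₁ : (u₁ : F) = K.starProjection u := sub_sub_cancel _ _
  have hTu₁ : T† u₁ = T† u := by rw [LinearPMap.map_sub, hTw, sub_zero]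
  have hgu₁ : ⟪(u₁ : F), g⟫_𝕜 = ⟪(u : F), g⟫_𝕜 := by
    rw [hu₁, K.inner_starProjection_left_eq_right, K.starProjection_eq_self_iff.2 hg]
  rw [← hgu₁, ← hTu₁]
  exact h u₁ (hu₁ ▸ K.starProjection_apply_mem u)

end LinearPMap

theorem solvability_criterion_closed_densely_defined_general
    {H₁ H₂ H₃ : Type*}
    [NormedAddCommGroup H₁] [InnerProductSpace ℂ H₁] [CompleteSpace H₁]
    [NormedAddCommGroup H₂] [InnerProductSpace ℂ H₂] [CompleteSpace H₂]
    [NormedAddCommGroup H₃] [InnerProductSpace ℂ H₃] [CompleteSpace H₃]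
    (T : H₁ →ₗ.[ℂ] H₂) (S : H₂ →ₗ.[ℂ] H₃)
    (hT_closed : T.IsClosed) (hS_closed : S.IsClosed)
    (hT_dense : Dense (T.domain : Set H₁))
    (hST : ∀ x : T.domain, ∃ hx : (T x : H₂) ∈ S.domain, S ⟨T x, hx⟩ = 0)
    (C : ℝ) (hC : 0 < C)
    (g : H₂) (hg : g ∈ S.domain) (hSg : S ⟨g, hg⟩ = 0) :
    (∃ v : T.domain, T v = g ∧ ‖(v : H₁)‖ ≤ C) ↔
      ∀ (u : H₂) (huS : u ∈ S.domain) (huT : u ∈ T.adjoint.domain),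
        ‖(inner ℂ u g : ℂ)‖ ^ 2 ≤
          C ^ 2 * (‖T.adjoint ⟨u, huT⟩‖ ^ 2 + ‖S ⟨u, huS⟩‖ ^ 2) := by
  constructor
  · rintro ⟨v, hTv, hv⟩ u huS huT
    have hug : ‖⟪u, g⟫_ℂ‖ ≤ C * ‖T† ⟨u, huT⟩‖ :=
      (norm_inner_le_of_apply_eq hT_dense hTv ⟨u, huT⟩).trans (by gcongr)
    calc ‖⟪u, g⟫_ℂ‖ ^ 2 ≤ C ^ 2 * ‖T† ⟨u, huT⟩‖ ^ 2 := by rw [← mul_pow]; gcongr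
      _ ≤ C ^ 2 * (‖T† ⟨u, huT⟩‖ ^ 2 + ‖S ⟨u, huS⟩‖ ^ 2) := by
        gcongr
        exact le_add_of_nonneg_right (by positivity)
  · intro hEst
    have : CompleteSpace S.ker := hS_closed.isClosed_ker.completeSpace_coe
    refine exists_apply_eq_norm_le_of_norm_inner_le hT_closed hT_dense hC.le <|
      norm_inner_le_of_forall_mem hT_dense S.ker (fun x ↦ (S.mem_ker_iff _).2 (hST x))
        ((S.mem_ker_iff g).2 ⟨hg, hSg⟩) fun u hu ↦ ?_
    obtain ⟨huS, hSu⟩ := (S.mem_ker_iff u).1 hu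
    have hEst_u := hEst u huS u.2
    rw [hSu, norm_zero, zero_pow two_ne_zero, add_zero, ← mul_pow] at hEst_u
    exact (pow_le_pow_iff_left₀ (norm_nonneg _) (by positivity) two_ne_zero).1 hEst_u

/-- Functional-analytic criterion (Lemma 5.3 of the paper) for solving `T v = g` with a
norm bound `‖v‖ ≤ C`, for closed densely defined operators `T`, `S` between complex Hilbert
spaces with `S ∘ T = 0`. -/
theorem solvability_criterion_closed_densely_defined
    {H₁ H₂ H₃ : Type*}
    [NormedAddCommGroup H₁] [InnerProductSpace ℂ H₁] [CompleteSpace H₁]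
    [NormedAddCommGroup H₂] [InnerProductSpace ℂ H₂] [CompleteSpace H₂]
    [NormedAddCommGroup H₃] [InnerProductSpace ℂ H₃] [CompleteSpace H₃]
    (T : H₁ →ₗ.[ℂ] H₂) (S : H₂ →ₗ.[ℂ] H₃)
    (hT_closed : T.IsClosed) (hS_closed : S.IsClosed)
    (hT_dense : Dense (T.domain : Set H₁)) (hS_dense : Dense (S.domain : Set H₂))
    (hST : ∀ x : T.domain, ∃ hx : (T x : H₂) ∈ S.domain, S ⟨T x, hx⟩ = 0)
    (C : ℝ) (hC : 0 < C)
    (g : H₂) (hg : g ∈ S.domain) (hSg : S ⟨g, hg⟩ = 0) :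
    (∃ v : T.domain, T v = g ∧ ‖(v : H₁)‖ ≤ C) ↔
      ∀ (u : H₂) (huS : u ∈ S.domain) (huT : u ∈ T.adjoint.domain),
        ‖(inner ℂ u g : ℂ)‖ ^ 2 ≤
          C ^ 2 * (‖T.adjoint ⟨u, huT⟩‖ ^ 2 + ‖S ⟨u, huS⟩‖ ^ 2) :=
  solvability_criterion_closed_densely_defined_general T S hT_closed hS_closed hT_dense hST C hC g
    hg hSg
end

section
/- Let $Y$ be a topological space and let $\pi : Y \to \mathbb{C}^n$ be a continuous map. For $y \in Y$ define $R(y) \in [0, +\infty]$ as the supremum of the set of all $R' > 0$ such that the restriction of $\pi$ to the full preimage $\pi^{-1}\big(B_{R'}(\pi(y))\big)$ is a bijection onto the open ball $B_{R'}(\pi(y))$ (with the convention that the supremum of the empty set is $0$). Then the function $R : Y \to [0, +\infty]$ is lower semicontinuous; in fact $R(y') \geq R(y) - |\pi(y') - \pi(y)|$ whenever $R(y)$ is finite and $|\pi(y') - \pi(y)| \le R(y)$. -/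
open Metric ENNReal Set

lemma bijOn_preimage_subset {α β : Type*} {f : α → β} {s t : Set β}
    (hst : s ⊆ t) (h : Set.BijOn f (f ⁻¹' t) t) : Set.BijOn f (f ⁻¹' s) s := by
  refine ⟨fun x hx => hx, h.injOn.mono (Set.preimage_mono hst), fun b hb => ?_⟩
  obtain ⟨a, ha, rfl⟩ := h.surjOn (hst hb)
  exact ⟨a, hb, rfl⟩

lemma radius_key {Y : Type*} {n : ℕ}
    (π : Y → EuclideanSpace ℂ (Fin n)) (y y' : Y) {r' : ℝ≥0∞}
    (hr : 0 < r' ∧ r' ≠ ⊤ ∧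
      Set.BijOn π (π ⁻¹' Metric.ball (π y) r'.toReal) (Metric.ball (π y) r'.toReal))
    (hd : ENNReal.ofReal (dist (π y') (π y)) < r') :
    0 < r' - ENNReal.ofReal (dist (π y') (π y)) ∧
      (r' - ENNReal.ofReal (dist (π y') (π y))) ≠ ⊤ ∧
      Set.BijOn π
        (π ⁻¹' Metric.ball (π y') (r' - ENNReal.ofReal (dist (π y') (π y))).toReal)
        (Metric.ball (π y') (r' - ENNReal.ofReal (dist (π y') (π y))).toReal) := by
  obtain ⟨hr0, hrt, hbij⟩ := hr
  set d : ℝ≥0∞ := ENNReal.ofReal (dist (π y') (π y)) with hdd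
  have htop : r' - d ≠ ⊤ := by
    exact fun h => hrt (by simpa using ENNReal.sub_eq_top_iff.mp h |>.1)
  have hpos : 0 < r' - d := tsub_pos_iff_lt.mpr hd
  have htr : (r' - d).toReal = r'.toReal - dist (π y') (π y) := by
    rw [ENNReal.toReal_sub_of_le hd.le hrt, hdd, ENNReal.toReal_ofReal dist_nonneg]
  have hsub : Metric.ball (π y') (r' - d).toReal ⊆ Metric.ball (π y) r'.toReal := by
    apply Metric.ball_subset_ball'
    rw [htr]; linarith
  exact ⟨hpos, htop, bijOn_preimage_subset hsub hbij⟩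

/-- Lower semicontinuity (with an explicit quantitative bound) of the radius function
`R` from Section 5.1 of the paper: `R(y)` is the supremum of radii `R'` such that the
projection `π` restricts to a bijection from the full preimage of the ball
`B_{R'}(π(y))` onto that ball. -/
theorem radius_function_lowerSemicontinuous
    {Y : Type*} [TopologicalSpace Y] {n : ℕ}
    (π : Y → EuclideanSpace ℂ (Fin n)) (hπ : Continuous π)
    (R : Y → ℝ≥0∞)
    (hR : ∀ y, R y = sSup {R' : ℝ≥0∞ | 0 < R' ∧ R' ≠ ⊤ ∧
        Set.BijOn π (π ⁻¹' Metric.ball (π y) R'.toReal)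
          (Metric.ball (π y) R'.toReal)}) :
    LowerSemicontinuous R ∧
      ∀ y y' : Y, R y ≠ ⊤ → ENNReal.ofReal (dist (π y') (π y)) ≤ R y →
        R y - ENNReal.ofReal (dist (π y') (π y)) ≤ R y' := by
  constructor
  · intro y c hc
    rw [hR y] at hc
    obtain ⟨r', hr', hcr'⟩ := lt_sSup_iff.mp hc
    have hrt := hr'.2.1
    have hδpos : (0:ℝ≥0∞) < r' - c := tsub_pos_iff_lt.mpr hcr'
    have hδtop : r' - c ≠ ⊤ := fun h => hrt (ENNReal.sub_eq_top_iff.mp h).1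
    have hopen : IsOpen {y' | dist (π y') (π y) < (r' - c).toReal} := by
      have : Continuous fun y' => dist (π y') (π y) := (hπ.dist continuous_const)
      exact isOpen_lt this continuous_const
    have hmem : y ∈ {y' | dist (π y') (π y) < (r' - c).toReal} := by
      simp only [Set.mem_setOf_eq, dist_self]
      exact ENNReal.toReal_pos hδpos.ne' hδtop
    filter_upwards [hopen.mem_nhds hmem] with y' hy'
    have hd : ENNReal.ofReal (dist (π y') (π y)) < r' - c := by
      rwa [ENNReal.ofReal_lt_iff_lt_toReal dist_nonneg hδtop]
    have hd' : ENNReal.ofReal (dist (π y') (π y)) < r' :=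
      hd.trans_le tsub_le_self
    have hkey := radius_key π y y' hr' hd'
    have hle : r' - ENNReal.ofReal (dist (π y') (π y)) ≤ R y' := by
      rw [hR y']; exact le_sSup hkey
    refine lt_of_lt_of_le ?_ hle
    rw [lt_tsub_iff_right]
    calc c + ENNReal.ofReal (dist (π y') (π y)) < c + (r' - c) := by
          exact ENNReal.add_lt_add_left (by exact fun h => (hcr'.trans_le le_top).ne (h ▸ rfl)) hd
      _ = r' := add_tsub_cancel_of_le hcr'.le
  · intro y y' _ _
    set d : ℝ≥0∞ := ENNReal.ofReal (dist (π y') (π y)) with hdd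
    rw [tsub_le_iff_right, hR y]
    apply sSup_le
    intro r' hr'
    rcases le_or_gt r' d with h | h
    · exact h.trans (le_add_self)
    · have hkey := radius_key π y y' hr' h
      rw [← tsub_le_iff_right]
      rw [hR y']
      exact le_sSup hkey
end
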